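/- arXiv:2205.12907 — 2 statements merged into one kernel-verified Lean document; each statement's English description precedes it below -/
import Mathlib

section
/- Modified electromagnetic energy balance for the leapfrog Maxwell step (Scheme-II): let Δt ∈ ℝ and let E⁰, E¹, B⁻, B⁰ᐟ², B⁺, J : G → ℝ³ be grid functions (representing E^n, E^{n+1}, B^{n−1/2}, B^{n+1/2}, B^{n+3/2}, J^{n+1/2}) satisfying, for all j ∈ G, B⁰ᐟ²(j) − B⁻(j) = −Δt · (Π E⁰)(j), B⁺(j) − B⁰ᐟ²(j) = −Δt · (Π E¹)(j), and E¹(j) − E⁰(j) = Δt · (Π B⁰ᐟ²)(j) − Δt · J(j). Then ∑_{j∈G} (‖E¹(j)‖² + B⁺(j) · B⁰ᐟ²(j)) − ∑_{j∈G} (‖E⁰(j)‖² + B⁰ᐟ²(j) · B⁻(j)) = −Δt · ∑_{j∈G} J(j) · (E⁰(j) + E¹(j)). -/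
open scoped BigOperators RealInnerProductSpace

/-- The periodic grid index set `G = ZMod N₁ × ZMod N₂ × ZMod N₃`. -/
abbrev Grid (N₁ N₂ N₃ : ℕ) : Type := ZMod N₁ × ZMod N₂ × ZMod N₃

/-- Shift of a grid index by `k` steps in the `d`-th coordinate direction
(periodic wrap-around). -/
def gshift {N₁ N₂ N₃ : ℕ} (d : Fin 3) (k : ℤ) (j : Grid N₁ N₂ N₃) : Grid N₁ N₂ N₃ :=
  if d = 0 then (j.1 + (k : ZMod N₁), j.2.1, j.2.2)
  else if d = 1 then (j.1, j.2.1 + (k : ZMod N₂), j.2.2)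
  else (j.1, j.2.1, j.2.2 + (k : ZMod N₃))

/-- Central difference of a scalar grid function `S` in direction `d`:
`(D_d S)(j) = (S(j+e_d) − S(j−e_d)) / (2Δx_d)`. -/
noncomputable def Dd {N₁ N₂ N₃ : ℕ} (Δx : Fin 3 → ℝ) (d : Fin 3)
    (S : Grid N₁ N₂ N₃ → ℝ) (j : Grid N₁ N₂ N₃) : ℝ :=
  (S (gshift d 1 j) - S (gshift d (-1) j)) / (2 * Δx d)

/-- Discrete curl `Π` of a vector-valued grid function, built from the
central differences `D_d`. -/
noncomputable def discCurl {N₁ N₂ N₃ : ℕ} (Δx : Fin 3 → ℝ)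
    (S : Grid N₁ N₂ N₃ → EuclideanSpace ℝ (Fin 3)) (j : Grid N₁ N₂ N₃) :
    EuclideanSpace ℝ (Fin 3) :=
  (EuclideanSpace.equiv (Fin 3) ℝ).symm
    ![Dd Δx 1 (fun i => S i 2) j - Dd Δx 2 (fun i => S i 1) j,
      Dd Δx 2 (fun i => S i 0) j - Dd Δx 0 (fun i => S i 2) j,
      Dd Δx 0 (fun i => S i 1) j - Dd Δx 1 (fun i => S i 0) j]

/-- The standard cross product on Euclidean three-space. -/
noncomputable def cross3 (a b : EuclideanSpace ℝ (Fin 3)) : EuclideanSpace ℝ (Fin 3) :=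
  (EuclideanSpace.equiv (Fin 3) ℝ).symm
    ![a 1 * b 2 - a 2 * b 1, a 2 * b 0 - a 0 * b 2, a 0 * b 1 - a 1 * b 0]

/-!
Pair the update of `E` with `E⁰ + E¹` and the two updates of `B` with `B^{n+1/2}`: pointwise,
the change of the modified energy is `Δt` times `⟪Π B, E⁰⟫ − ⟪B, Π E⁰⟫ + ⟪Π B, E¹⟫ − ⟪B, Π E¹⟫`,
minus the work `Δt ⟪J, E⁰ + E¹⟫`. Summation by parts on the periodic grid makes each central
difference, hence the discrete curl, symmetric for `∑ⱼ ⟪·, ·⟫`, so the curl terms cancel.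
-/

lemma gshift_neg_gshift {N₁ N₂ N₃ : ℕ} (d : Fin 3) (k : ℤ) (j : Grid N₁ N₂ N₃) :
    gshift d (-k) (gshift d k j) = j := by
  unfold gshift
  split_ifs <;> simp

lemma gshift_gshift_neg {N₁ N₂ N₃ : ℕ} (d : Fin 3) (k : ℤ) (j : Grid N₁ N₂ N₃) :
    gshift d k (gshift d (-k) j) = j := by
  simpa using gshift_neg_gshift d (-k) j

def gshiftEquiv {N₁ N₂ N₃ : ℕ} (d : Fin 3) (k : ℤ) : Grid N₁ N₂ N₃ ≃ Grid N₁ N₂ N₃ where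
  toFun := gshift d k
  invFun := gshift d (-k)
  left_inv := gshift_neg_gshift d k
  right_inv := gshift_gshift_neg d k

section SummationByParts

variable {N₁ N₂ N₃ : ℕ} [NeZero N₁] [NeZero N₂] [NeZero N₃]

lemma sum_gshift_mul (d : Fin 3) (k : ℤ) (S T : Grid N₁ N₂ N₃ → ℝ) :
    ∑ j, S (gshift d k j) * T j = ∑ j, S j * T (gshift d (-k) j) := by
  rw [← (gshiftEquiv d (-k)).sum_comp]
  simp [gshiftEquiv, gshift_gshift_neg]

lemma sum_Dd_mul (Δx : Fin 3 → ℝ) (d : Fin 3) (S T : Grid N₁ N₂ N₃ → ℝ) :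
    ∑ j, Dd Δx d S j * T j = -∑ j, S j * Dd Δx d T j := by
  have shift_back := sum_gshift_mul d (-1) S T
  rw [neg_neg] at shift_back
  simp only [Dd, div_mul_eq_mul_div, mul_div_assoc', sub_mul, mul_sub, ← Finset.sum_div,
    Finset.sum_sub_distrib, sum_gshift_mul d 1, shift_back]
  ring

omit [NeZero N₁] [NeZero N₂] [NeZero N₃] in
lemma discCurl_apply (Δx : Fin 3 → ℝ) (S : Grid N₁ N₂ N₃ → EuclideanSpace ℝ (Fin 3))
    (j : Grid N₁ N₂ N₃) :
    discCurl Δx S j 0 = Dd Δx 1 (fun i => S i 2) j - Dd Δx 2 (fun i => S i 1) j ∧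
    discCurl Δx S j 1 = Dd Δx 2 (fun i => S i 0) j - Dd Δx 0 (fun i => S i 2) j ∧
    discCurl Δx S j 2 = Dd Δx 0 (fun i => S i 1) j - Dd Δx 1 (fun i => S i 0) j := by
  simp [discCurl, EuclideanSpace.equiv]

lemma sum_inner_discCurl (Δx : Fin 3 → ℝ) (A B : Grid N₁ N₂ N₃ → EuclideanSpace ℝ (Fin 3)) :
    ∑ j, ⟪discCurl Δx A j, B j⟫ = ∑ j, ⟪A j, discCurl Δx B j⟫ := by
  simp only [PiLp.inner_apply, RCLike.inner_apply, conj_trivial, Fin.sum_univ_three,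
    discCurl_apply, sub_mul, mul_sub, Finset.sum_add_distrib, Finset.sum_sub_distrib, sum_Dd_mul]
  ring

end SummationByParts

lemma leapfrog_energy_increment {F : Type*} [NormedAddCommGroup F] [InnerProductSpace ℝ F]
    (Δt : ℝ) (e₀ e₁ bm bh bp cb c₀ c₁ j : F)
    (hB1 : bh - bm = -(Δt • c₀)) (hB2 : bp - bh = -(Δt • c₁))
    (hE : e₁ - e₀ = Δt • cb - Δt • j) :
    (‖e₁‖ ^ 2 + ⟪bp, bh⟫) - (‖e₀‖ ^ 2 + ⟪bh, bm⟫)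
      = Δt * ((⟪cb, e₀⟫ - ⟪bh, c₀⟫) + (⟪cb, e₁⟫ - ⟪bh, c₁⟫)) - Δt * ⟪j, e₀ + e₁⟫ := by
  have hE' : ‖e₁‖ ^ 2 - ‖e₀‖ ^ 2 = ⟪e₁ - e₀, e₀ + e₁⟫ := by
    simp only [inner_sub_left, inner_add_right, real_inner_self_eq_norm_sq,
      real_inner_comm e₀ e₁]
    ring
  have hB : ⟪bp, bh⟫ - ⟪bh, bm⟫ = ⟪bh, (bp - bh) + (bh - bm)⟫ := by
    rw [inner_add_right, inner_sub_right, inner_sub_right, real_inner_comm bp,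
      real_inner_self_eq_norm_sq]
    ring
  calc (‖e₁‖ ^ 2 + ⟪bp, bh⟫) - (‖e₀‖ ^ 2 + ⟪bh, bm⟫)
      = ⟪e₁ - e₀, e₀ + e₁⟫ + ⟪bh, (bp - bh) + (bh - bm)⟫ := by rw [← hE', ← hB]; ring
    _ = _ := by
      rw [hE, hB1, hB2]
      simp only [inner_sub_left, inner_add_right, inner_neg_right, real_inner_smul_left,
        real_inner_smul_right]
      ring

theorem schemeII_em_energy_balance_general
    (N₁ N₂ N₃ : ℕ) [NeZero N₁] [NeZero N₂] [NeZero N₃]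
    (Δx : Fin 3 → ℝ) (Δt : ℝ)
    (E0 E1 Bm Bh Bp J : Grid N₁ N₂ N₃ → EuclideanSpace ℝ (Fin 3))
    (hB1 : ∀ j, Bh j - Bm j = -(Δt • discCurl Δx E0 j))
    (hB2 : ∀ j, Bp j - Bh j = -(Δt • discCurl Δx E1 j))
    (hE : ∀ j, E1 j - E0 j = Δt • discCurl Δx Bh j - Δt • J j) :
    (∑ j : Grid N₁ N₂ N₃, (‖E1 j‖ ^ 2 + ⟪Bp j, Bh j⟫))
      - (∑ j : Grid N₁ N₂ N₃, (‖E0 j‖ ^ 2 + ⟪Bh j, Bm j⟫))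
      = -Δt * ∑ j : Grid N₁ N₂ N₃, ⟪J j, E0 j + E1 j⟫ := by
  have curl_terms_cancel : ∀ E : Grid N₁ N₂ N₃ → EuclideanSpace ℝ (Fin 3),
      ∑ j, (⟪discCurl Δx Bh j, E j⟫ - ⟪Bh j, discCurl Δx E j⟫) = 0 := fun E => by
    rw [Finset.sum_sub_distrib, sum_inner_discCurl, sub_self]
  rw [← Finset.sum_sub_distrib, Finset.sum_congr rfl fun j _ =>
      leapfrog_energy_increment Δt _ _ _ _ _ _ _ _ _ (hB1 j) (hB2 j) (hE j),
    Finset.sum_sub_distrib, ← Finset.mul_sum, ← Finset.mul_sum, Finset.sum_add_distrib,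
    curl_terms_cancel, curl_terms_cancel]
  ring

/-- Modified electromagnetic energy balance for the leapfrog Maxwell step
(Scheme-II). -/
theorem schemeII_em_energy_balance
    (N₁ N₂ N₃ : ℕ) [NeZero N₁] [NeZero N₂] [NeZero N₃]
    (Δx : Fin 3 → ℝ) (hΔx : ∀ d, 0 < Δx d) (Δt : ℝ)
    (E0 E1 Bm Bh Bp J : Grid N₁ N₂ N₃ → EuclideanSpace ℝ (Fin 3))
    (hB1 : ∀ j, Bh j - Bm j = -(Δt • discCurl Δx E0 j))
    (hB2 : ∀ j, Bp j - Bh j = -(Δt • discCurl Δx E1 j))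
    (hE : ∀ j, E1 j - E0 j = Δt • discCurl Δx Bh j - Δt • J j) :
    (∑ j : Grid N₁ N₂ N₃, (‖E1 j‖ ^ 2 + ⟪Bp j, Bh j⟫))
      - (∑ j : Grid N₁ N₂ N₃, (‖E0 j‖ ^ 2 + ⟪Bh j, Bm j⟫))
      = -Δt * ∑ j : Grid N₁ N₂ N₃, ⟪J j, E0 j + E1 j⟫ :=
  schemeII_em_energy_balance_general N₁ N₂ N₃ Δx Δt E0 E1 Bm Bh Bp J hB1 hB2 hE
end

section
/- Exact total energy conservation of the fully discrete Scheme-I Lorentz-force/Maxwell step (Theorem 4.4, Scheme-I variant): let Δt ∈ ℝ, let ρ : G → ℝ, and let u*, u¹, E⁰, E¹, B⁰, B¹ : G → ℝ³ be grid functions satisfying, for all j ∈ G: (i) B¹(j) − B⁰(j) = −Δt · Π((E⁰+E¹)/2)(j); (ii) E¹(j) − E⁰(j) = Δt · Π((B⁰+B¹)/2)(j) − Δt · ρ(j)·(u*(j)+u¹(j))/2; (iii) u¹(j) − u*(j) = Δt · ((E⁰(j)+E¹(j))/2 + ((u*(j)+u¹(j))/2) × ((B⁰(j)+B¹(j))/2)).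 Then ∑_{j∈G} (ρ(j)‖u¹(j)‖² + ‖E¹(j)‖² + ‖B¹(j)‖²) = ∑_{j∈G} (ρ(j)‖u*(j)‖² + ‖E⁰(j)‖² + ‖B⁰(j)‖²), i.e. the exact discrete total energy ℰ = (ΔV/2)∑_j (ρ_j‖u_j‖² + 3ρ_jT_j + ‖E_j‖² + ‖B_j‖²) is preserved. -/
open scoped BigOperators RealInnerProductSpace

section Aux

variable {N₁ N₂ N₃ : ℕ} [NeZero N₁] [NeZero N₂] [NeZero N₃]

omit [NeZero N₁] [NeZero N₂] [NeZero N₃] in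
lemma gshift_gshift (d : Fin 3) (k l : ℤ) (j : Grid N₁ N₂ N₃) :
    gshift d l (gshift d k j) = gshift d (k + l) j := by
  fin_cases d <;> simp [gshift, add_assoc]

omit [NeZero N₁] [NeZero N₂] [NeZero N₃] in
lemma gshift_zero (d : Fin 3) (j : Grid N₁ N₂ N₃) : gshift d 0 j = j := by
  fin_cases d <;> simp [gshift]

lemma sum_gshift (d : Fin 3) (k : ℤ) (f : Grid N₁ N₂ N₃ → ℝ) :
    ∑ j, f (gshift d k j) = ∑ j, f j := by
  apply Fintype.sum_bijective (gshift d k) _ _ _ (fun _ => rfl)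
  apply Function.bijective_iff_has_inverse.2
  exact ⟨gshift d (-k), fun j => by rw [gshift_gshift]; simp [gshift_zero],
    fun j => by rw [gshift_gshift]; simp [gshift_zero]⟩

/-- Discrete integration by parts: `∑ (D_d a) b + a (D_d b) = 0` on the periodic grid. -/
lemma pairvanish (Δx : Fin 3 → ℝ) (d : Fin 3) (a b : Grid N₁ N₂ N₃ → ℝ) :
    ∑ j, (Dd Δx d a j * b j + a j * Dd Δx d b j) = 0 := by
  have h1 : ∑ j, a (gshift d 1 j) * b j = ∑ j, a j * b (gshift d (-1) j) := by
    have := sum_gshift (N₁:=N₁) (N₂:=N₂) (N₃:=N₃) d (-1) (fun j => a (gshift d 1 j) * b j)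
    rw [← this]
    apply Finset.sum_congr rfl
    intro j _
    rw [gshift_gshift]
    norm_num [gshift_zero]
  have h2 : ∑ j, a (gshift d (-1) j) * b j = ∑ j, a j * b (gshift d 1 j) := by
    have := sum_gshift (N₁:=N₁) (N₂:=N₂) (N₃:=N₃) d 1 (fun j => a (gshift d (-1) j) * b j)
    rw [← this]
    apply Finset.sum_congr rfl
    intro j _
    rw [gshift_gshift]
    norm_num [gshift_zero]
  calc ∑ j, (Dd Δx d a j * b j + a j * Dd Δx d b j)
      = (∑ j : Grid N₁ N₂ N₃, (a (gshift d 1 j) * b j - a (gshift d (-1) j) * b j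
          + (a j * b (gshift d 1 j) - a j * b (gshift d (-1) j)))) / (2 * Δx d) := by
        rw [Finset.sum_div]
        exact Finset.sum_congr rfl (fun j _ => by simp only [Dd]; ring)
    _ = 0 := by
        rw [Finset.sum_add_distrib, Finset.sum_sub_distrib, Finset.sum_sub_distrib, h1, h2]
        ring

lemma discCurl_apply0 (Δx : Fin 3 → ℝ) (S : Grid N₁ N₂ N₃ → EuclideanSpace ℝ (Fin 3))
    (j : Grid N₁ N₂ N₃) :
    discCurl Δx S j 0 = Dd Δx 1 (fun i => S i 2) j - Dd Δx 2 (fun i => S i 1) j := by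
  simp [discCurl]

lemma discCurl_apply1 (Δx : Fin 3 → ℝ) (S : Grid N₁ N₂ N₃ → EuclideanSpace ℝ (Fin 3))
    (j : Grid N₁ N₂ N₃) :
    discCurl Δx S j 1 = Dd Δx 2 (fun i => S i 0) j - Dd Δx 0 (fun i => S i 2) j := by
  simp [discCurl]

lemma discCurl_apply2 (Δx : Fin 3 → ℝ) (S : Grid N₁ N₂ N₃ → EuclideanSpace ℝ (Fin 3))
    (j : Grid N₁ N₂ N₃) :
    discCurl Δx S j 2 = Dd Δx 0 (fun i => S i 1) j - Dd Δx 1 (fun i => S i 0) j := by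
  simp [discCurl]

/-- Symmetry of the discrete curl with respect to the grid pairing. -/
lemma curl_sym (Δx : Fin 3 → ℝ) (S T : Grid N₁ N₂ N₃ → EuclideanSpace ℝ (Fin 3)) :
    ∑ j, (discCurl Δx S j 0 * T j 0 + discCurl Δx S j 1 * T j 1 + discCurl Δx S j 2 * T j 2)
      = ∑ j, (S j 0 * discCurl Δx T j 0 + S j 1 * discCurl Δx T j 1
          + S j 2 * discCurl Δx T j 2) := by
  rw [← sub_eq_zero, ← Finset.sum_sub_distrib]
  calc ∑ j : Grid N₁ N₂ N₃,
        ((discCurl Δx S j 0 * T j 0 + discCurl Δx S j 1 * T j 1 + discCurl Δx S j 2 * T j 2)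
          - (S j 0 * discCurl Δx T j 0 + S j 1 * discCurl Δx T j 1
              + S j 2 * discCurl Δx T j 2))
      = ∑ j : Grid N₁ N₂ N₃,
          ((Dd Δx 1 (fun i => S i 2) j * (fun i => T i 0) j
              + (fun i => S i 2) j * Dd Δx 1 (fun i => T i 0) j)
          - (Dd Δx 2 (fun i => S i 1) j * (fun i => T i 0) j
              + (fun i => S i 1) j * Dd Δx 2 (fun i => T i 0) j)
          + ((Dd Δx 2 (fun i => S i 0) j * (fun i => T i 1) j
              + (fun i => S i 0) j * Dd Δx 2 (fun i => T i 1) j)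
          - (Dd Δx 0 (fun i => S i 2) j * (fun i => T i 1) j
              + (fun i => S i 2) j * Dd Δx 0 (fun i => T i 1) j))
          + ((Dd Δx 0 (fun i => S i 1) j * (fun i => T i 2) j
              + (fun i => S i 1) j * Dd Δx 0 (fun i => T i 2) j)
          - (Dd Δx 1 (fun i => S i 0) j * (fun i => T i 2) j
              + (fun i => S i 0) j * Dd Δx 1 (fun i => T i 2) j))) := by
        refine Finset.sum_congr rfl (fun j _ => ?_)
        simp only [discCurl_apply0, discCurl_apply1, discCurl_apply2]
        ring
    _ = 0 := by
        rw [Finset.sum_add_distrib, Finset.sum_add_distrib, Finset.sum_sub_distrib,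
          Finset.sum_sub_distrib, Finset.sum_sub_distrib,
          pairvanish, pairvanish, pairvanish, pairvanish, pairvanish, pairvanish]
        ring

lemma norm_sq_eq3 (x : EuclideanSpace ℝ (Fin 3)) :
    ‖x‖ ^ 2 = x 0 ^ 2 + x 1 ^ 2 + x 2 ^ 2 := by
  rw [← real_inner_self_eq_norm_sq]
  simp only [PiLp.inner_apply, RCLike.inner_apply, conj_trivial, Fin.sum_univ_three]
  ring

end Aux

/-- Exact total energy conservation of the fully discrete Scheme-I
Lorentz-force/Maxwell step (Theorem 4.4, Scheme-I variant): the exact discrete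
total energy `∑_j (ρ‖u‖² + ‖E‖² + ‖B‖²)` is preserved. -/
theorem schemeI_fully_discrete_total_energy
    (N₁ N₂ N₃ : ℕ) [NeZero N₁] [NeZero N₂] [NeZero N₃]
    (Δx : Fin 3 → ℝ) (hΔx : ∀ d, 0 < Δx d) (Δt : ℝ)
    (ρ : Grid N₁ N₂ N₃ → ℝ)
    (ustar u1 E0 E1 B0 B1 : Grid N₁ N₂ N₃ → EuclideanSpace ℝ (Fin 3))
    (hB : ∀ j, B1 j - B0 j = -(Δt • discCurl Δx (fun i => ((2:ℝ)⁻¹) • (E0 i + E1 i)) j))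
    (hE : ∀ j, E1 j - E0 j =
      Δt • discCurl Δx (fun i => ((2:ℝ)⁻¹) • (B0 i + B1 i)) j
        - Δt • (ρ j • (((2:ℝ)⁻¹) • (ustar j + u1 j))))
    (hu : ∀ j, u1 j - ustar j =
      Δt • (((2:ℝ)⁻¹) • (E0 j + E1 j)
        + cross3 (((2:ℝ)⁻¹) • (ustar j + u1 j)) (((2:ℝ)⁻¹) • (B0 j + B1 j)))) :
    ∑ j : Grid N₁ N₂ N₃, (ρ j * ‖u1 j‖ ^ 2 + ‖E1 j‖ ^ 2 + ‖B1 j‖ ^ 2)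
      = ∑ j : Grid N₁ N₂ N₃, (ρ j * ‖ustar j‖ ^ 2 + ‖E0 j‖ ^ 2 + ‖B0 j‖ ^ 2) := by
  set S : Grid N₁ N₂ N₃ → EuclideanSpace ℝ (Fin 3) :=
    fun i => ((2:ℝ)⁻¹) • (E0 i + E1 i) with hSdef
  set T : Grid N₁ N₂ N₃ → EuclideanSpace ℝ (Fin 3) :=
    fun i => ((2:ℝ)⁻¹) • (B0 i + B1 i) with hTdef
  have hSk : ∀ (j : Grid N₁ N₂ N₃) (k : Fin 3), S j k = (2:ℝ)⁻¹ * (E0 j k + E1 j k) := by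
    intro j k; simp [hSdef]; ring
  have hTk : ∀ (j : Grid N₁ N₂ N₃) (k : Fin 3), T j k = (2:ℝ)⁻¹ * (B0 j k + B1 j k) := by
    intro j k; simp [hTdef]; ring
  have key : ∀ j : Grid N₁ N₂ N₃,
      (ρ j * ‖u1 j‖ ^ 2 + ‖E1 j‖ ^ 2 + ‖B1 j‖ ^ 2)
        - (ρ j * ‖ustar j‖ ^ 2 + ‖E0 j‖ ^ 2 + ‖B0 j‖ ^ 2)
      = 2 * Δt * ((discCurl Δx T j 0 * S j 0 + discCurl Δx T j 1 * S j 1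
            + discCurl Δx T j 2 * S j 2)
          - (discCurl Δx S j 0 * T j 0 + discCurl Δx S j 1 * T j 1
            + discCurl Δx S j 2 * T j 2)) := by
    intro j
    have hB0 := congrArg (fun v => v 0) (hB j)
    have hB1 := congrArg (fun v => v 1) (hB j)
    have hB2 := congrArg (fun v => v 2) (hB j)
    have hE0 := congrArg (fun v => v 0) (hE j)
    have hE1 := congrArg (fun v => v 1) (hE j)
    have hE2 := congrArg (fun v => v 2) (hE j)
    have hu0 := congrArg (fun v => v 0) (hu j)
    have hu1' := congrArg (fun v => v 1) (hu j)
    have hu2 := congrArg (fun v => v 2) (hu j)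
    simp only [PiLp.sub_apply, PiLp.add_apply, PiLp.smul_apply, PiLp.neg_apply,
      smul_eq_mul, cross3, PiLp.continuousLinearEquiv_symm_apply, WithLp.equiv_symm_apply, PiLp.toLp_apply, Matrix.cons_val_zero,
      Matrix.cons_val_one, Matrix.head_cons, Matrix.cons_val_two, Matrix.tail_cons]
      at hB0 hB1 hB2 hE0 hE1 hE2 hu0 hu1' hu2
    simp only [norm_sq_eq3, hSk, hTk]
    linear_combination
      (ρ j * (u1 j 0 + ustar j 0)) * hu0
      + (ρ j * (u1 j 1 + ustar j 1)) * hu1'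
      + (ρ j * (u1 j 2 + ustar j 2)) * hu2
      + (E1 j 0 + E0 j 0) * hE0 + (E1 j 1 + E0 j 1) * hE1 + (E1 j 2 + E0 j 2) * hE2
      + (B1 j 0 + B0 j 0) * hB0 + (B1 j 1 + B0 j 1) * hB1 + (B1 j 2 + B0 j 2) * hB2
  rw [← sub_eq_zero, ← Finset.sum_sub_distrib]
  calc ∑ j : Grid N₁ N₂ N₃,
        ((ρ j * ‖u1 j‖ ^ 2 + ‖E1 j‖ ^ 2 + ‖B1 j‖ ^ 2)
          - (ρ j * ‖ustar j‖ ^ 2 + ‖E0 j‖ ^ 2 + ‖B0 j‖ ^ 2))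
      = 2 * Δt * ((∑ j : Grid N₁ N₂ N₃, (discCurl Δx T j 0 * S j 0
            + discCurl Δx T j 1 * S j 1 + discCurl Δx T j 2 * S j 2))
          - ∑ j : Grid N₁ N₂ N₃, (discCurl Δx S j 0 * T j 0
            + discCurl Δx S j 1 * T j 1 + discCurl Δx S j 2 * T j 2)) := by
        rw [← Finset.sum_sub_distrib, Finset.mul_sum]
        exact Finset.sum_congr rfl (fun j _ => key j)
    _ = 0 := by
        rw [curl_sym Δx T S]
        have : ∑ j : Grid N₁ N₂ N₃,
            (T j 0 * discCurl Δx S j 0 + T j 1 * discCurl Δx S j 1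
              + T j 2 * discCurl Δx S j 2)
            = ∑ j : Grid N₁ N₂ N₃, (discCurl Δx S j 0 * T j 0
              + discCurl Δx S j 1 * T j 1 + discCurl Δx S j 2 * T j 2) :=
          Finset.sum_congr rfl (fun j _ => by ring)
        rw [this, sub_self, mul_zero]
end
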